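/- Let z > 0, and let F be a real random variable. Then f_z'(F) ≤ C e^{-z²/4} + f_z'(F) 1_{F > z/2} pointwise almost surely, where C is an absolute constant and f_z is the Stein equation solution. -/

import Mathlib

open MeasureTheory Real

/-- The standard normal cumulative distribution function. -/
noncomputable def stdGaussCDF (z : ℝ) : ℝ :=
  ∫ t in Set.Iic z, Real.exp (-t ^ 2 / 2) / Real.sqrt (2 * Real.pi)

/-- The standard normal density. -/
noncomputable def stdGaussPDF (w : ℝ) : ℝ :=
  Real.exp (-w ^ 2 / 2) / Real.sqrt (2 * Real.pi)

/-- The solution of the Stein equation for the Kolmogorov test function `1_{· ≤ z}`. -/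
noncomputable def steinSol (z w : ℝ) : ℝ :=
  if w ≤ z then stdGaussCDF w * (1 - stdGaussCDF z) / stdGaussPDF w
  else stdGaussCDF z * (1 - stdGaussCDF w) / stdGaussPDF w

/-- The derivative of the Stein solution, defined via the Stein equation
`f_z'(w) = w f_z(w) + 1_{w ≤ z} - Φ(z)`. -/
noncomputable def steinSol' (z w : ℝ) : ℝ :=
  w * steinSol z w + (if w ≤ z then 1 else 0) - stdGaussCDF z

/-!
For `w ≤ z` the Stein equation gives `f_z'(w) = (1 - Φ(z)) (1 + w Φ(w) / φ(w))`. When `w ≤ 0`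
the second factor is at most `1`, and `1 - Φ(z) = O(e^{-z²/4})`. When `0 < w ≤ z/2`, Mills'
ratio `1 - Φ(z) ≤ φ(z) / z` bounds the extra term by `(w / z) e^{(w² - z²)/2} ≤ e^{-z²/4} / 2`.
Above `z/2` the indicator term reproduces `f_z'(F)` itself.
-/

open ProbabilityTheory Set Filter Topology

lemma stdGaussPDF_eq_gaussianPDFReal : stdGaussPDF = gaussianPDFReal 0 1 := by
  ext w
  simp [stdGaussPDF, gaussianPDFReal, div_eq_inv_mul]

lemma stdGaussPDF_pos (w : ℝ) : 0 < stdGaussPDF w := by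
  rw [stdGaussPDF_eq_gaussianPDFReal]
  exact gaussianPDFReal_pos _ _ _ one_ne_zero

lemma integrable_stdGaussPDF : Integrable stdGaussPDF := by
  rw [stdGaussPDF_eq_gaussianPDFReal]
  exact integrable_gaussianPDFReal _ _

lemma integral_stdGaussPDF : ∫ t, stdGaussPDF t = 1 := by
  rw [stdGaussPDF_eq_gaussianPDFReal]
  exact integral_gaussianPDFReal_eq_one _ one_ne_zero

lemma stdGaussCDF_eq_setIntegral (z : ℝ) : stdGaussCDF z = ∫ t in Iic z, stdGaussPDF t := rfl

lemma stdGaussCDF_nonneg (z : ℝ) : 0 ≤ stdGaussCDF z :=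
  setIntegral_nonneg measurableSet_Iic fun t _ => (stdGaussPDF_pos t).le

lemma one_sub_stdGaussCDF_eq_setIntegral (z : ℝ) :
    1 - stdGaussCDF z = ∫ t in Ioi z, stdGaussPDF t := by
  rw [← integral_stdGaussPDF, stdGaussCDF_eq_setIntegral,
    ← intervalIntegral.integral_Iic_add_Ioi integrable_stdGaussPDF.integrableOn
      integrable_stdGaussPDF.integrableOn, add_sub_cancel_left]

lemma stdGaussCDF_le_one (z : ℝ) : stdGaussCDF z ≤ 1 := by
  have := setIntegral_nonneg (μ := volume) (s := Ioi z) measurableSet_Ioi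
    fun t _ => (stdGaussPDF_pos t).le
  linarith [one_sub_stdGaussCDF_eq_setIntegral z]

lemma stdGaussPDF_div_stdGaussPDF (z w : ℝ) :
    stdGaussPDF z / stdGaussPDF w = exp ((w ^ 2 - z ^ 2) / 2) := by
  have : 0 < √(2 * π) := by positivity
  rw [stdGaussPDF, stdGaussPDF, div_div_div_cancel_right₀ this.ne', ← exp_sub]
  ring_nf

lemma hasDerivAt_stdGaussPDF (t : ℝ) : HasDerivAt stdGaussPDF (-t * stdGaussPDF t) t := by
  have h : HasDerivAt (fun t => -t ^ 2 / 2) (-t) t := by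
    simpa [neg_div] using ((hasDerivAt_pow 2 t).neg).div_const 2
  refine (h.exp.div_const √(2 * π)).congr_deriv ?_
  rw [stdGaussPDF]
  ring

lemma tendsto_stdGaussPDF_atTop : Tendsto stdGaussPDF atTop (𝓝 0) := by
  have h : Tendsto (fun t : ℝ => -t ^ 2 / 2) atTop atBot :=
    (tendsto_neg_atTop_atBot.comp (tendsto_pow_atTop two_ne_zero)).atBot_div_const two_pos
  have := (tendsto_exp_atBot.comp h).div_const √(2 * π)
  rw [zero_div] at this
  exact this

lemma integrableOn_mul_stdGaussPDF (z : ℝ) :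
    IntegrableOn (fun t => t * stdGaussPDF t) (Ioi z) := by
  have h := ((integrable_mul_exp_neg_mul_sq (b := 1 / 2) (by norm_num)).div_const √(2 * π))
  refine (h.congr (Eventually.of_forall fun t => ?_)).integrableOn
  simp only [stdGaussPDF]
  ring_nf

lemma setIntegral_Ioi_mul_stdGaussPDF (z : ℝ) :
    ∫ t in Ioi z, t * stdGaussPDF t = stdGaussPDF z := by
  have hderiv (t : ℝ) : HasDerivAt (-stdGaussPDF) (t * stdGaussPDF t) t := by
    simpa using (hasDerivAt_stdGaussPDF t).neg
  rw [integral_Ioi_of_hasDerivAt_of_tendsto (hderiv z).continuousAt.continuousWithinAt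
    (fun t _ => hderiv t) (integrableOn_mul_stdGaussPDF z) tendsto_stdGaussPDF_atTop.neg]
  simp

lemma one_sub_stdGaussCDF_le_div {z : ℝ} (hz : 0 < z) :
    1 - stdGaussCDF z ≤ stdGaussPDF z / z := by
  rw [one_sub_stdGaussCDF_eq_setIntegral, ← setIntegral_Ioi_mul_stdGaussPDF, ← integral_div]
  refine setIntegral_mono_on integrable_stdGaussPDF.integrableOn
    ((integrableOn_mul_stdGaussPDF z).div_const z) measurableSet_Ioi fun t ht => ?_
  rw [mul_div_right_comm]
  exact le_mul_of_one_le_left (stdGaussPDF_pos t).le ((one_le_div hz).2 (le_of_lt ht))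

lemma one_sub_stdGaussCDF_le_exp {z : ℝ} (hz : 0 < z) :
    1 - stdGaussCDF z ≤ 3 / 2 * exp (-z ^ 2 / 4) := by
  rcases le_or_gt z 1 with hz1 | hz1
  · have := add_one_le_exp (-z ^ 2 / 4)
    nlinarith [stdGaussCDF_nonneg z]
  · have hpdf : stdGaussPDF z ≤ exp (-z ^ 2 / 2) :=
      div_le_self (exp_pos _).le (one_le_sqrt.2 (by nlinarith [pi_gt_three]))
    calc 1 - stdGaussCDF z ≤ stdGaussPDF z / z := one_sub_stdGaussCDF_le_div hz
      _ ≤ stdGaussPDF z := div_le_self (stdGaussPDF_pos z).le hz1.le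
      _ ≤ exp (-z ^ 2 / 4) := hpdf.trans (exp_le_exp.2 (by nlinarith))
      _ ≤ 3 / 2 * exp (-z ^ 2 / 4) := by linarith [exp_pos (-z ^ 2 / 4)]

lemma steinSol'_of_le {z w : ℝ} (h : w ≤ z) :
    steinSol' z w = (1 - stdGaussCDF z) * (1 + w * stdGaussCDF w / stdGaussPDF w) := by
  rw [steinSol', steinSol, if_pos h, if_pos h]
  ring

lemma steinSol'_le_of_le_half {z w : ℝ} (hz : 0 < z) (hw : w ≤ z / 2) :
    steinSol' z w ≤ 2 * exp (-z ^ 2 / 4) := by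
  have hT := one_sub_stdGaussCDF_le_exp hz
  have hT0 : 0 ≤ 1 - stdGaussCDF z := sub_nonneg.2 (stdGaussCDF_le_one z)
  suffices h : (1 - stdGaussCDF z) * (w * stdGaussCDF w / stdGaussPDF w) ≤
      1 / 2 * exp (-z ^ 2 / 4) by
    rw [steinSol'_of_le (by linarith), mul_one_add]
    linarith
  rcases le_or_gt w 0 with hw0 | hw0
  · refine (mul_nonpos_of_nonneg_of_nonpos hT0 ?_).trans (by positivity)
    exact div_nonpos_of_nonpos_of_nonneg (mul_nonpos_of_nonpos_of_nonneg hw0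
      (stdGaussCDF_nonneg w)) (stdGaussPDF_pos w).le
  · calc (1 - stdGaussCDF z) * (w * stdGaussCDF w / stdGaussPDF w)
        ≤ stdGaussPDF z / z * (w / stdGaussPDF w) := by
          have hΦ := stdGaussCDF_nonneg w
          have hφ := stdGaussPDF_pos w
          refine mul_le_mul (one_sub_stdGaussCDF_le_div hz) ?_ (by positivity)
            (div_nonneg (stdGaussPDF_pos z).le hz.le)
          exact div_le_div_of_nonneg_right (mul_le_of_le_one_right hw0.le (stdGaussCDF_le_one w))
            hφ.le
      _ = w / z * exp ((w ^ 2 - z ^ 2) / 2) := by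
          rw [← stdGaussPDF_div_stdGaussPDF]
          ring
      _ ≤ 1 / 2 * exp (-z ^ 2 / 4) := by
          refine mul_le_mul ?_ (exp_le_exp.2 (by nlinarith)) (exp_pos _).le (by norm_num)
          rw [div_le_iff₀ hz]
          linarith

theorem stmt_7 :
    ∃ C > (0 : ℝ), ∀ {Ω : Type} [MeasureSpace Ω] (F : Ω → ℝ) (z : ℝ), 0 < z →
      ∀ᵐ ω : Ω, steinSol' z (F ω) ≤
        C * Real.exp (-z ^ 2 / 4) +
          steinSol' z (F ω) * (if z / 2 < F ω then 1 else 0) := by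
  refine ⟨2, two_pos, fun F z hz => ae_of_all _ fun ω => ?_⟩
  split_ifs with h
  · linarith [exp_pos (-z ^ 2 / 4)]
  · simpa using steinSol'_le_of_le_half hz (not_lt.1 h)
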